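/- arXiv:0807.2940 — 6 statements merged into one kernel-verified Lean document; each statement's English description precedes it below -/
import Mathlib

section
/- Let X be a compact Hausdorff space and σ : X → X a homeomorphism. Then the union Per^∞(σ) ∪ PIP(σ) of the set of aperiodic points and the set of periodic interior points is dense in X. -/
/-- `Per^n(σ)` : the set of points `x` with `σ^n(x) = x`, for `n : ℤ`. -/
def perN {X : Type*} [TopologicalSpace X] (σ : X ≃ₜ X) (n : ℤ) : Set X :=
  {x : X | (σ.toEquiv ^ n) x = x}

/-- `Per(σ)` : the set of periodic points. -/
def periodicPts {X : Type*} [TopologicalSpace X] (σ : X ≃ₜ X) : Set X :=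
  ⋃ n ≥ (1 : ℤ), perN σ n

/-- `Per_n(σ)` : the set of points of minimal period `n`. -/
def perMin {X : Type*} [TopologicalSpace X] (σ : X ≃ₜ X) (n : ℤ) : Set X :=
  {x : X | (σ.toEquiv ^ n) x = x ∧ ∀ j : ℤ, 0 < j → j < n → (σ.toEquiv ^ j) x ≠ x}

/-- `PIP(σ)` : the set of periodic interior points. -/
def PIP {X : Type*} [TopologicalSpace X] (σ : X ≃ₜ X) : Set X :=
  ⋃ n ≥ (1 : ℤ), interior (perMin σ n)

open Set

private lemma cont_zpow {X : Type*} [TopologicalSpace X] (σ : X ≃ₜ X) (n : ℤ) :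
    Continuous fun x => (σ.toEquiv ^ n) x := by
  obtain ⟨k, rfl | rfl⟩ := Int.eq_nat_or_neg n
  · have h : (fun x => (σ.toEquiv ^ (k : ℤ)) x) = (⇑σ)^[k] := by
      rw [zpow_natCast]; rfl
    rw [h]; exact σ.continuous.iterate k
  · have h : (fun x => (σ.toEquiv ^ (-(k : ℤ))) x) = (⇑σ.symm)^[k] := by
      rw [zpow_neg, zpow_natCast, ← inv_pow]; rfl
    rw [h]; exact σ.symm.continuous.iterate k

private lemma perN_closed {X : Type*} [TopologicalSpace X] [T2Space X] (σ : X ≃ₜ X) (n : ℤ) :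
    IsClosed (perN σ n) :=
  isClosed_eq (cont_zpow σ n) continuous_id

/-- For a homeomorphism `σ` of a compact Hausdorff space `X`, the union of the set
`Per^∞(σ)` of aperiodic points and the set `PIP(σ)` of periodic interior points is dense. -/
theorem dense_aperiodic_union_PIP {X : Type*} [TopologicalSpace X] [CompactSpace X]
    [T2Space X] (σ : X ≃ₜ X) :
    Dense ((periodicPts σ)ᶜ ∪ PIP σ) := by
  rw [dense_iff_inter_open]
  intro U hU hUne
  rcases (U ∩ (periodicPts σ)ᶜ).eq_empty_or_nonempty with hh | hh
  case inr => exact hh.mono (inter_subset_inter_right U subset_union_left)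
  have hUper : U ⊆ periodicPts σ := by
    intro x hx
    by_contra hxn
    exact (Set.eq_empty_iff_forall_notMem.mp hh x) ⟨hx, hxn⟩
  -- Step 1 (Baire): some `perN σ n`, `n ≥ 1`, contains a nonempty open subset of `U`.
  have hP : ∃ m : ℕ, ∃ V : Set X, IsOpen V ∧ V.Nonempty ∧ V ⊆ U ∧ V ⊆ perN σ (m + 1) := by
    set f : ℕ → Set X := fun n => if n = 0 then Uᶜ else perN σ n with hf
    have hfc : ∀ n, IsClosed (f n) := by
      intro n
      by_cases h : n = 0 <;> simp [hf, h, hU.isClosed_compl, perN_closed]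
    have hfU : ⋃ n, f n = univ := by
      ext x
      simp only [mem_iUnion, mem_univ, iff_true]
      by_cases hx : x ∈ U
      · obtain ⟨n, hn1, hxn⟩ := by simpa [periodicPts, mem_iUnion] using hUper hx
        refine ⟨n.toNat, ?_⟩
        have h1 : n.toNat ≠ 0 := by omega
        have h2 : ((n.toNat : ℤ)) = n := by omega
        simp [hf, h1, h2, hxn]
      · exact ⟨0, by simp [hf, hx]⟩
    have hdense := dense_iUnion_interior_of_closed hfc hfU
    obtain ⟨x, hxU, hxI⟩ := dense_iff_inter_open.mp hdense U hU hUne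
    obtain ⟨n, hn⟩ := mem_iUnion.mp hxI
    have hn0 : n ≠ 0 := by
      rintro rfl
      exact (interior_subset (s := Uᶜ) (by simpa [hf] using hn)) hxU
    refine ⟨n - 1, U ∩ interior (f n), hU.inter isOpen_interior, ⟨x, hxU, hn⟩,
      inter_subset_left, ?_⟩
    have : f n = perN σ n := by simp [hf, hn0]
    rw [this]
    have : ((n - 1 : ℕ) : ℤ) + 1 = (n : ℤ) := by omega
    rw [this]
    exact inter_subset_right.trans interior_subset
  -- Step 2: take the minimal such period.
  classical
  set m0 := Nat.find hP with hm0
  obtain ⟨V, hVo, hVne, hVU, hVper⟩ := Nat.find_spec hP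
  have hmin : ∀ d < m0, V ∩ interior (perN σ (d + 1)) = ∅ := by
    intro d hd
    rcases (V ∩ interior (perN σ (d + 1))).eq_empty_or_nonempty with h | h
    · exact h
    · exact absurd ⟨V ∩ interior (perN σ (d + 1)), hVo.inter isOpen_interior, h,
        inter_subset_left.trans hVU, inter_subset_right.trans interior_subset⟩
        (Nat.find_min hP hd)
  set W : Set X := V ∩ ⋂ d ∈ Finset.range m0, (perN σ (d + 1))ᶜ with hW
  have hWo : IsOpen W :=
    hVo.inter (isOpen_biInter_finset fun d _ => (perN_closed σ _).isOpen_compl)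
  -- `W` is nonempty: otherwise `V` is covered by finitely many nowhere dense closed sets.
  have hWne : W.Nonempty := by
    rcases W.eq_empty_or_nonempty with hWe | h
    · exfalso
      have hcov : V ⊆ ⋃ d ∈ Finset.range m0, perN σ (d + 1) := by
        intro y hy
        by_contra hyn
        refine (Set.eq_empty_iff_forall_notMem.mp hWe y) ⟨hy, ?_⟩
        simp only [mem_iInter, mem_compl_iff]
        intro d hd hmem
        exact hyn (mem_biUnion hd hmem)
      set g : ℕ → Set X := fun d => if d < m0 then perN σ (d + 1) else Vᶜ with hg
      have hgc : ∀ d, IsClosed (g d) := by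
        intro d
        by_cases h : d < m0 <;> simp [hg, h, hVo.isClosed_compl, perN_closed]
      have hgU : ⋃ d, g d = univ := by
        ext y
        simp only [mem_iUnion, mem_univ, iff_true]
        by_cases hy : y ∈ V
        · obtain ⟨d, hd, hyd⟩ := by simpa using hcov hy
          exact ⟨d, by simp [hg, hd, hyd]⟩
        · exact ⟨m0, by simp [hg, hy]⟩
      have hdense := dense_iUnion_interior_of_closed hgc hgU
      obtain ⟨y, hyV, hyI⟩ := dense_iff_inter_open.mp hdense V hVo hVne
      obtain ⟨d, hd⟩ := mem_iUnion.mp hyI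
      by_cases hdm : d < m0
      · have : y ∈ V ∩ interior (perN σ (d + 1)) := ⟨hyV, by simpa [hg, hdm] using hd⟩
        rw [hmin d hdm] at this
        exact this
      · exact (interior_subset (s := Vᶜ) (by simpa [hg, hdm] using hd)) hyV
    · exact h
  -- `W ⊆ perMin σ (m0 + 1)`.
  have hWsub : W ⊆ perMin σ ((m0 : ℤ) + 1) := by
    rintro y ⟨hyV, hyI⟩
    refine ⟨hVper hyV, ?_⟩
    intro j hj0 hjm heq
    have hd : j.toNat - 1 < m0 := by omega
    have hcast : ((j.toNat - 1 : ℕ) : ℤ) + 1 = j := by omega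
    have := (mem_iInter₂.mp hyI) (j.toNat - 1) (Finset.mem_range.mpr hd)
    rw [mem_compl_iff] at this
    exact this (by simpa [perN, hcast] using heq)
  obtain ⟨x0, hx0⟩ := hWne
  refine ⟨x0, hVU hx0.1, Or.inr ?_⟩
  refine mem_iUnion₂.mpr ⟨(m0 : ℤ) + 1, by omega, ?_⟩
  exact interior_maximal hWsub hWo hx0
end

section
/- Let X = [0,1] × [−1,1] ⊆ ℝ² with the subspace topology and let σ : X → X be the reflection σ(x,y) = (x,−y). Then PIP(σ) = Per_2(σ) = X \ ([0,1] × {0}), while the interior of Per(σ) in X is all of X; in particular PIP(σ) is a proper subset of the interior of Per(σ), so PIP(σ) does not coincide with (Per(σ))° in general. -/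
/-- The rectangle `X = [0,1] × [-1,1] ⊆ ℝ²`, with the subspace topology. -/
def rect : Set (ℝ × ℝ) := Set.Icc (0 : ℝ) 1 ×ˢ Set.Icc (-1 : ℝ) 1

/-- Reflection in the x-axis, `σ(x,y) = (x,-y)`, as a homeomorphism of `[0,1] × [-1,1]`. -/
def reflHomeo : rect ≃ₜ rect where
  toFun p := ⟨(p.1.1, -p.1.2), p.2.1, neg_le_neg p.2.2.2, neg_le.mpr p.2.2.1⟩
  invFun p := ⟨(p.1.1, -p.1.2), p.2.1, neg_le_neg p.2.2.2, neg_le.mpr p.2.2.1⟩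
  left_inv p := by ext <;> simp
  right_inv p := by ext <;> simp
  continuous_toFun := by apply Continuous.subtype_mk; fun_prop
  continuous_invFun := by apply Continuous.subtype_mk; fun_prop


lemma refl_apply (p : rect) : (reflHomeo.toEquiv p).val = (p.val.1, -p.val.2) := rfl

lemma refl_sq : (reflHomeo.toEquiv) ^ (2:ℤ) = 1 := by
  apply Equiv.ext
  intro p
  apply Subtype.ext
  rw [zpow_two, Equiv.Perm.mul_apply, refl_apply, refl_apply]
  simp

lemma refl_fix (p : rect) : reflHomeo.toEquiv p = p ↔ p.val.2 = 0 := by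
  rw [Subtype.ext_iff, refl_apply, Prod.ext_iff]
  constructor
  · rintro ⟨-, h⟩; simp at h; linarith
  · intro h; simp [h]

lemma refl_pow_even {n : ℤ} (h : Even n) : reflHomeo.toEquiv ^ n = 1 := by
  obtain ⟨k, rfl⟩ := h
  rw [← two_mul, zpow_mul, refl_sq, one_zpow]

lemma refl_pow_odd {n : ℤ} (h : Odd n) : reflHomeo.toEquiv ^ n = reflHomeo.toEquiv := by
  obtain ⟨k, rfl⟩ := h
  rw [zpow_add, zpow_mul, refl_sq, one_zpow, zpow_one, one_mul]

lemma mem_perMin_two (p : rect) : p ∈ perMin reflHomeo 2 ↔ p.val.2 ≠ 0 := by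
  constructor
  · rintro ⟨-, h⟩ h0
    exact h 1 one_pos one_lt_two (by rw [zpow_one, refl_fix]; exact h0)
  · intro h
    refine ⟨by rw [refl_sq]; rfl, ?_⟩
    intro j hj hj2
    have hj1 : j = 1 := by omega
    subst hj1
    simp only [zpow_one, Ne, refl_fix]
    exact h

lemma perMin_two_eq :
    perMin reflHomeo 2 = (Subtype.val ⁻¹' (Set.Icc (0 : ℝ) 1 ×ˢ ({0} : Set ℝ)))ᶜ := by
  ext p
  rw [mem_perMin_two]
  simp only [Set.mem_compl_iff, Set.mem_preimage, Set.mem_prod, Set.mem_singleton_iff]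
  constructor
  · intro h hh; exact h hh.2
  · intro h h0; exact h ⟨p.2.1, h0⟩

lemma isOpen_perMin_two : IsOpen (perMin reflHomeo 2) := by
  rw [perMin_two_eq]
  exact (((isClosed_Icc).prod isClosed_singleton).preimage continuous_subtype_val).isOpen_compl

lemma perMin_ge_three {n : ℤ} (h : 3 ≤ n) : perMin reflHomeo n = ∅ := by
  ext p
  simp only [perMin, Set.mem_setOf_eq, Set.mem_empty_iff_false, iff_false, not_and]
  intro _ h2
  exact h2 2 two_pos (by omega) (by rw [refl_sq]; rfl)

lemma interior_perMin_one : interior (perMin reflHomeo 1) = ∅ := by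
  have hsub : perMin reflHomeo 1 ⊆ {p : rect | p.val.2 = 0} := by
    rintro p ⟨h, -⟩
    rw [zpow_one, refl_fix] at h
    exact h
  have : interior {p : rect | p.val.2 = 0} = ∅ := by
    rw [Set.eq_empty_iff_forall_notMem]
    intro p hp
    have hpS : p.val.2 = 0 := interior_subset (s := {x : rect | x.val.2 = 0}) hp
    have hmem : ∀ n : ℕ, ((p.val.1, 1 / ((n : ℝ) + 1)) : ℝ × ℝ) ∈ rect := by
      intro n
      refine ⟨p.2.1, ?_, ?_⟩
      · have : (0:ℝ) < 1 / ((n : ℝ) + 1) := by positivity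
        linarith
      · rw [div_le_one (by positivity)]
        linarith [Nat.cast_nonneg (α := ℝ) n]
    set q : ℕ → rect := fun n => ⟨(p.val.1, 1 / ((n : ℝ) + 1)), hmem n⟩ with hq
    have htend : Filter.Tendsto q Filter.atTop (nhds p) := by
      rw [tendsto_subtype_rng]
      have : Filter.Tendsto (fun n : ℕ => ((p.val.1, 1 / ((n : ℝ) + 1)) : ℝ × ℝ))
          Filter.atTop (nhds (p.val.1, 0)) :=
        Filter.Tendsto.prodMk_nhds tendsto_const_nhds
          tendsto_one_div_add_atTop_nhds_zero_nat
      have hpv : (p.val.1, (0:ℝ)) = p.val := by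
        ext <;> simp [hpS]
      rwa [hpv] at this
    have := (htend.eventually (mem_interior_iff_mem_nhds.mp hp)).exists
    obtain ⟨n, hn⟩ := this
    have : (1 : ℝ) / ((n : ℝ) + 1) = 0 := hn
    have : (0:ℝ) < 1 / ((n : ℝ) + 1) := by positivity
    linarith
  exact Set.eq_empty_of_subset_empty (this ▸ interior_mono hsub)

lemma PIP_eq : PIP reflHomeo = perMin reflHomeo 2 := by
  apply Set.Subset.antisymm
  · intro x hx
    simp only [PIP, Set.mem_iUnion] at hx
    obtain ⟨n, hn1, hx⟩ := hx
    rcases lt_trichotomy n 2 with h | h | h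
    · have hn : n = 1 := by omega
      rw [hn, interior_perMin_one] at hx
      exact absurd hx (Set.notMem_empty x)
    · rw [h] at hx
      exact interior_subset hx
    · rw [perMin_ge_three (by omega), interior_empty] at hx
      exact absurd hx (Set.notMem_empty x)
  · intro x hx
    simp only [PIP, Set.mem_iUnion]
    exact ⟨2, one_le_two, by rwa [isOpen_perMin_two.interior_eq]⟩

lemma periodicPts_eq : periodicPts reflHomeo = Set.univ := by
  rw [Set.eq_univ_iff_forall]
  intro p
  simp only [periodicPts, Set.mem_iUnion]
  exact ⟨2, one_le_two, by rw [perN, Set.mem_setOf_eq, refl_sq]; rfl⟩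

/-- For the reflection `σ(x,y) = (x,-y)` of `X = [0,1] × [-1,1]`:
`PIP(σ) = Per_2(σ) = X \ ([0,1] × {0})`, while the interior of `Per(σ)` in `X` is all of
`X`; in particular `PIP(σ) ⊊ (Per(σ))°`, so `PIP(σ)` does not coincide with the interior
of the set of periodic points in general. -/
theorem PIP_reflHomeo :
    PIP reflHomeo = perMin reflHomeo 2 ∧
    perMin reflHomeo 2 = (Subtype.val ⁻¹' (Set.Icc (0 : ℝ) 1 ×ˢ ({0} : Set ℝ)))ᶜ ∧
    interior (periodicPts reflHomeo) = Set.univ ∧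
    PIP reflHomeo ⊂ interior (periodicPts reflHomeo) := by
  refine ⟨PIP_eq, perMin_two_eq, by rw [periodicPts_eq, interior_univ], ?_⟩
  rw [periodicPts_eq, interior_univ, PIP_eq]
  constructor
  · exact Set.subset_univ _
  · intro hsub
    have hz : (((0:ℝ), (0:ℝ)) : ℝ × ℝ) ∈ rect := by
      constructor <;> constructor <;> norm_num
    have := hsub (Set.mem_univ (⟨((0:ℝ),(0:ℝ)), hz⟩ : rect))
    rw [mem_perMin_two] at this
    exact this rfl
end

section
/- Let A be a unital C*-algebra and B a commutative C*-subalgebra of A containing the unit of A. Then B has the intersection property for closed ideals of A if and only if B has the intersection property for ideals of A. (In particular, if every nonzero closed two-sided ideal of A intersects B nontrivially, then every nonzero two-sided ideal of A, not necessarily closed or self-adjoint, intersects B nontrivially.) -/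
/-- For a unital C*-algebra `A` and a commutative C*-subalgebra `B ⊆ A` containing the unit
(i.e. a norm-closed, star-closed, commutative unital subalgebra), `B` has the intersection
property for closed two-sided ideals of `A` if and only if `B` has the intersection property
for arbitrary (not necessarily closed or self-adjoint) two-sided ideals of `A`. -/
theorem intersection_property_closed_iff_all {A : Type*} [NormedRing A] [StarRing A]
    [CStarRing A] [CompleteSpace A] [NormedAlgebra ℂ A] [StarModule ℂ A]
    (B : StarSubalgebra ℂ A) (hBclosed : IsClosed (B : Set A))
    (hBcomm : ∀ x ∈ B, ∀ y ∈ B, x * y = y * x) :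
    (∀ I : TwoSidedIdeal A, IsClosed (I : Set A) → I ≠ ⊥ → ∃ b, b ∈ B ∧ b ∈ I ∧ b ≠ 0) ↔
    (∀ J : TwoSidedIdeal A, J ≠ ⊥ → ∃ b, b ∈ B ∧ b ∈ J ∧ b ≠ 0) := by
  constructor
  swap
  · intro h I _ hI
    exact h I hI
  intro hcl J hJ
  -- a nonzero element of `J`
  obtain ⟨x, hxJ, hx0⟩ : ∃ x, x ∈ J ∧ x ≠ 0 := by
    by_contra hc
    push_neg at hc
    refine hJ (SetLike.ext fun y => ?_)
    rw [TwoSidedIdeal.mem_bot]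
    exact ⟨fun h => hc y h, fun h => h ▸ J.zero_mem⟩
  haveI : Nontrivial A := ⟨⟨x, 0, hx0⟩⟩
  letI : CStarAlgebra A :=
    { ‹NormedRing A›, ‹StarRing A›, ‹CStarRing A›, ‹CompleteSpace A›,
      ‹NormedAlgebra ℂ A›, ‹StarModule ℂ A› with }
  -- the closure of `J` is a closed two-sided ideal
  set Icar : Set A := closure (J : Set A) with hIcar
  have hadd : ∀ {u v : A}, u ∈ Icar → v ∈ Icar → u + v ∈ Icar := fun hu hv =>
    map_mem_closure₂ continuous_add hu hv fun a ha b hb => J.add_mem ha hb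
  have hneg : ∀ {u : A}, u ∈ Icar → -u ∈ Icar := fun hu =>
    map_mem_closure continuous_neg hu fun a ha => J.neg_mem ha
  have hmull : ∀ {u v : A}, v ∈ Icar → u * v ∈ Icar := fun {u v} hv =>
    map_mem_closure (continuous_mul_left u) hv fun b hb => J.mul_mem_left u b hb
  have hmulr : ∀ {u v : A}, u ∈ Icar → u * v ∈ Icar := fun {u v} hu =>
    map_mem_closure (f := (· * v)) (continuous_mul_right v) hu fun b hb => J.mul_mem_right b v hb
  set I : TwoSidedIdeal A := TwoSidedIdeal.mk' Icar (subset_closure J.zero_mem)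
    hadd hneg hmull hmulr with hI
  have hImem : ∀ z : A, z ∈ I ↔ z ∈ Icar := fun z =>
    TwoSidedIdeal.mem_mk' _ _ _ _ _ _ z
  have hIclosed : IsClosed (I : Set A) := by
    have : (I : Set A) = Icar := TwoSidedIdeal.coe_mk' _ _ _ _ _ _
    rw [this]
    exact isClosed_closure
  have hIne : I ≠ ⊥ := by
    intro h
    apply hx0
    have hxI : x ∈ I := (hImem x).mpr (subset_closure hxJ)
    rw [h, TwoSidedIdeal.mem_bot] at hxI
    exact hxI
  obtain ⟨b, hbB, hbI, hb0⟩ := hcl I hIclosed hIne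
  -- the positive element `a = b⋆ b`
  set a : A := star b * b with ha_def
  have haB : a ∈ B := mul_mem (star_mem hbB) hbB
  have haI : a ∈ I := I.mul_mem_left (star b) b hbI
  have ha : IsSelfAdjoint a := IsSelfAdjoint.star_mul_self b
  have hna : ‖a‖ = ‖b‖ * ‖b‖ := CStarRing.norm_star_mul_self
  have hapos : 0 < ‖a‖ := by
    rw [hna]
    have : 0 < ‖b‖ := norm_pos_iff.mpr hb0
    positivity
  set ε : ℝ := ‖a‖ / 2 with hε_def
  have hε : 0 < ε := by positivity
  -- `‖a‖` belongs to the real spectrum of `a`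
  have hspec_nonneg : ∀ t ∈ spectrum ℝ a, 0 ≤ t := spectrum_star_mul_self_nonneg
  have hmem : ‖a‖ ∈ spectrum ℝ a := by
    rcases CStarAlgebra.norm_or_neg_norm_mem_spectrum ha with h | h
    · exact h
    · have h0 := hspec_nonneg _ h
      linarith
  -- the functions used for the functional calculus
  set e₀ : ℝ → ℝ := fun t => max (t - ε) 0 with he₀_def
  set h₀ : ℝ → ℝ := fun t => t / (t ^ 2 + (max (ε - t) 0) ^ 2) with hh₀_def
  have hden : ∀ t : ℝ, t ^ 2 + (max (ε - t) 0) ^ 2 ≠ 0 := by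
    intro t h
    have h1 : t = 0 := by nlinarith [sq_nonneg t, sq_nonneg (max (ε - t) 0)]
    subst h1
    have h2 : max ε 0 = ε := max_eq_left hε.le
    simp only [sub_zero, h2] at h
    nlinarith
  have hcont_e₀ : Continuous e₀ := (continuous_id.sub continuous_const).max continuous_const
  have hcont_h₀ : Continuous h₀ := by
    apply continuous_id.div
    · exact ((continuous_id.pow 2).add
        (((continuous_const.sub continuous_id).max continuous_const).pow 2))
    · exact hden
  set e : A := cfc e₀ a with he_def
  set h : A := cfc h₀ a with hh_def
  set f : A := a * h with hf_def
  -- `f = cfc (fun t => t * h₀ t) a`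
  have hf_eq : f = cfc (fun t : ℝ => t * h₀ t) a := by
    rw [cfc_mul (fun t : ℝ => t) h₀ a (continuous_id.continuousOn) hcont_h₀.continuousOn,
      cfc_id' ℝ a]
  -- `e * f = e`
  have hpt : ∀ t : ℝ, e₀ t * (t * h₀ t) = e₀ t := by
    intro t
    rcases le_or_gt t ε with hle | hlt
    · have : e₀ t = 0 := by
        simp only [he₀_def]
        exact max_eq_right (by linarith)
      rw [this, zero_mul]
    · have h1 : max (ε - t) 0 = 0 := max_eq_right (by linarith)
      have ht0 : t ≠ 0 := by linarith
      have : t * h₀ t = 1 := by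
        simp only [hh₀_def, h1]
        field_simp
        ring
      rw [this, mul_one]
  have hef : e * f = e := by
    rw [he_def, hf_eq, ← cfc_mul e₀ (fun t : ℝ => t * h₀ t) a hcont_e₀.continuousOn
      ((continuous_id.mul hcont_h₀).continuousOn)]
    exact cfc_congr fun t _ => hpt t
  -- `f` lies in the closure of `J`
  have hfI : f ∈ I := I.mul_mem_right a h haI
  have hfcl : f ∈ closure (J : Set A) := (hImem f).mp hfI
  obtain ⟨j, hjJ, hj_dist⟩ := Metric.mem_closure_iff.mp hfcl 1 one_pos
  have hj_norm : ‖f - j‖ < 1 := by rwa [dist_eq_norm] at hj_dist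
  -- the invertible element `y = 1 - (f - j)`
  set y : Aˣ := Units.oneSub (f - j) hj_norm with hy_def
  have hyval : (y : A) = 1 - (f - j) := rfl
  have key : e * (y : A) = e * j := by
    have expand : e * (1 - (f - j)) = e - e * f + e * j := by noncomm_ring
    rw [hyval, expand, hef]
    abel
  have heJ : e ∈ J := by
    have he_eq : e = (e * j) * (↑y⁻¹ : A) := by
      rw [← key, mul_assoc]
      simp
    rw [he_eq]
    exact J.mul_mem_right _ _ (J.mul_mem_left e j hjJ)
  -- `e ∈ B`
  have heB : e ∈ B := by
    have h1 : cfc e₀ a = cfc (fun z : ℂ => (e₀ z.re : ℂ)) a := cfc_real_eq_complex e₀ ha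
    have hn : IsStarNormal a := ha.isStarNormal
    have hcont : ContinuousOn (fun z : ℂ => (e₀ z.re : ℂ)) (spectrum ℂ a) :=
      (Complex.continuous_ofReal.comp (hcont_e₀.comp Complex.continuous_re)).continuousOn
    rw [he_def, h1, cfc_apply _ a hn hcont, cfcHom_eq_of_isStarNormal]
    apply StarAlgebra.elemental.le_of_mem hBclosed haB
    simp only [StarAlgHom.comp_apply, StarSubalgebra.coe_subtype]
    exact SetLike.coe_mem _
  -- `e ≠ 0`
  have hne : e ≠ 0 := by
    have hle : ‖e₀ ‖a‖‖ ≤ ‖e‖ :=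
      norm_apply_le_norm_cfc e₀ a hmem hcont_e₀.continuousOn ha
    have : e₀ ‖a‖ = ε := by
      simp only [he₀_def]
      rw [max_eq_left (by linarith)]
      rw [hε_def]
      ring
    intro h0
    rw [h0, norm_zero] at hle
    rw [this, Real.norm_eq_abs, abs_of_pos hε] at hle
    linarith
  exact ⟨e, heB, heJ, hne⟩
end

section
/- Let A be a C*-algebra, J a two-sided ideal of A (not assumed closed or self-adjoint), and let a be a positive element of A belonging to the norm closure of J. Let f : ℝ → ℝ be a continuous function with f(t) = 0 for all t ≤ 1/2. Then the element f(a), obtained by applying the continuous functional calculus of a to f, belongs to J. -/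
/-!
Since `f` vanishes on `(-∞, 1/2]`, we have `f = f · g · id` for `g t = t / max t (1/2) ^ 2`, so
`f(a) = f(a) u a` with `u = g(a)`. Choosing `b ∈ J` with `‖u (a - b)‖ < 1` gives
`f(a) (1 - u (a - b)) = f(a) u b ∈ J`, and `1 - u (a - b)` is invertible in the unitization
by the Neumann series, so `f(a) ∈ J`.
-/

theorem isQuasiregular_neg_of_norm_lt_one (𝕜 : Type*) {A : Type*} [NontriviallyNormedField 𝕜]
    [CompleteSpace 𝕜] [NonUnitalNormedRing A] [CompleteSpace A] [NormedSpace 𝕜 A]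
    [IsScalarTower 𝕜 A A] [SMulCommClass 𝕜 A A] [RegularNormedAlgebra 𝕜 A]
    {r : A} (hr : ‖r‖ < 1) : IsQuasiregular (-r) := by
  rw [← Unitization.isQuasiregular_inr_iff (R := 𝕜), isQuasiregular_iff_isUnit,
    Unitization.inr_neg, ← sub_eq_add_neg]
  exact (Units.oneSub _ ((Unitization.norm_inr r).trans_lt hr)).isUnit

namespace TwoSidedIdeal

theorem mem_of_sub_mul_mem {R : Type*} [NonUnitalRing R] (J : TwoSidedIdeal R) {x r : R}
    (hr : IsQuasiregular (-r)) (h : x - x * r ∈ J) : x ∈ J := by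
  obtain ⟨s, hs, -⟩ := isQuasiregular_iff.mp hr
  have hx : x = (x - x * r) + (x - x * r) * s :=
    calc x = x + x * (s + -r + -r * s) := by rw [hs, mul_zero, add_zero]
      _ = (x - x * r) + (x - x * r) * s := by noncomm_ring
  rw [hx]
  exact J.add_mem h (J.mul_mem_right _ _ h)

theorem mem_of_eq_mul_mul_of_mem_closure (𝕜 : Type*) {A : Type*} [NontriviallyNormedField 𝕜]
    [CompleteSpace 𝕜] [NonUnitalNormedRing A] [CompleteSpace A] [NormedSpace 𝕜 A]
    [IsScalarTower 𝕜 A A] [SMulCommClass 𝕜 A A] [RegularNormedAlgebra 𝕜 A]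
    (J : TwoSidedIdeal A) {x u a : A} (hx : x = x * u * a) (ha : a ∈ closure (J : Set A)) :
    x ∈ J := by
  obtain ⟨b, hbJ, hab⟩ := Metric.mem_closure_iff.mp ha (‖u‖ + 1)⁻¹ (by positivity)
  have hr : ‖u * (a - b)‖ < 1 :=
    calc ‖u * (a - b)‖ ≤ ‖u‖ * ‖a - b‖ := norm_mul_le _ _
      _ ≤ ‖u‖ * (‖u‖ + 1)⁻¹ := by rw [← dist_eq_norm]; gcongr
      _ < 1 := by rw [mul_inv_lt_iff₀ (by positivity)]; linarith
  refine J.mem_of_sub_mul_mem (isQuasiregular_neg_of_norm_lt_one 𝕜 hr) ?_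
  have hsub : x - x * (u * (a - b)) = x * u * b := by
    nth_rewrite 1 [hx]; noncomm_ring
  rw [hsub]
  exact J.mul_mem_left _ _ hbJ

end TwoSidedIdeal

theorem exists_cfcₙ_eq_cfcₙ_mul_mul {A : Type*} {p : A → Prop} [NonUnitalRing A] [StarRing A]
    [TopologicalSpace A] [Module ℝ A] [IsScalarTower ℝ A A] [SMulCommClass ℝ A A]
    [NonUnitalContinuousFunctionalCalculus ℝ A p] {a : A} (ha : p a) {f : ℝ → ℝ}
    (hf : ContinuousOn f (quasispectrum ℝ a)) {c : ℝ} (hc : 0 < c)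
    (hfc : ∀ t ≤ c, f t = 0) : ∃ u : A, cfcₙ f a = cfcₙ f a * u * a := by
  set g : ℝ → ℝ := fun t ↦ t / max t c ^ 2
  have hg : Continuous g :=
    continuous_id.div (by fun_prop) fun t ↦ pow_ne_zero 2 (hc.trans_le (le_max_right t c)).ne'
  have hfg : ∀ t, f t * g t * t = f t := by
    intro t
    rcases le_or_gt t c with htc | htc
    · simp [hfc t htc]
    · have ht : t ≠ 0 := (hc.trans htc).ne'
      simp only [g, max_eq_left htc.le]
      field_simp
  refine ⟨cfcₙ g a, ?_⟩
  calc cfcₙ f a = cfcₙ (fun t ↦ f t * g t * t) a := by simp only [hfg]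
    _ = cfcₙ f a * cfcₙ g a * a := by
      rw [cfcₙ_mul _ _ a, cfcₙ_mul f g a hf (hfc 0 hc.le) hg.continuousOn, cfcₙ_id' ℝ a]

/-- Let `A` be a C*-algebra, `J` a two-sided (not necessarily closed or self-adjoint) ideal
of `A`, and `a` a positive element of `A` lying in the norm closure of `J`. If `f : ℝ → ℝ`
is continuous and vanishes on `(-∞, 1/2]`, then `f(a)` (continuous functional calculus)
belongs to `J`. -/
theorem cfc_mem_of_mem_closure {A : Type*} [NonUnitalCStarAlgebra A]
    [PartialOrder A] [StarOrderedRing A]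
    (J : TwoSidedIdeal A) (a : A) (ha : 0 ≤ a) (haJ : a ∈ closure (J : Set A))
    (f : ℝ → ℝ) (hf : Continuous f) (hf0 : ∀ t : ℝ, t ≤ 1 / 2 → f t = 0) :
    cfcₙ f a ∈ J := by
  obtain ⟨u, hu⟩ := exists_cfcₙ_eq_cfcₙ_mul_mul (IsSelfAdjoint.of_nonneg ha) hf.continuousOn
    (by norm_num) hf0
  exact J.mem_of_eq_mul_mul_of_mem_closure ℂ hu haJ
end

section
/- Let A and B be unital C*-algebras and let τ : A → B be a unital 2-positive linear map. Then the right multiplicative domain of τ equals {a ∈ A : τ(a a*) = τ(a) τ(a)*}; that is, for a ∈ A one has τ(a x) = τ(a) τ(x) for all x ∈ A if and only if τ(a a*) = τ(a) τ(a)*. -/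
set_option maxHeartbeats 1000000 in
open Matrix in
/-- (Right-sided version of Choi's multiplicative domain theorem.)
Let `A`, `B` be unital C*-algebras and `τ : A → B` a unital 2-positive linear map, i.e. the
induced entrywise map on 2×2 matrices sends positive elements (elements of the form `Nᴴ * N`)
to positive elements. Then the right multiplicative domain of `τ` equals
`{a : A | τ (a * a*) = τ a * (τ a)*}`: for every `a ∈ A`, one has
`τ (a x) = τ a * τ x` for all `x` if and only if `τ (a a*) = τ a (τ a)*`. -/
theorem rightMultiplicativeDomain_eq {A B : Type*} [CStarAlgebra A] [CStarAlgebra B]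
    (τ : A →ₗ[ℂ] B) (hunital : τ 1 = 1)
    (h2pos : ∀ M : Matrix (Fin 2) (Fin 2) A, (∃ N : Matrix (Fin 2) (Fin 2) A, M = Nᴴ * N) →
      ∃ P : Matrix (Fin 2) (Fin 2) B, M.map τ = Pᴴ * P) :
    ∀ a : A, (∀ x : A, τ (a * x) = τ a * τ x) ↔ τ (a * star a) = τ a * star (τ a) := by
  letI := CStarAlgebra.spectralOrder B
  haveI := CStarAlgebra.spectralOrderedRing B
  -- τ is star-preserving
  have hstar : ∀ y : A, τ (star y) = star (τ y) := by
    intro y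
    obtain ⟨P, hP⟩ := h2pos !![1, y; star y, star y * y] ⟨!![1, y; 0, 0], by
      ext i j
      fin_cases i <;> fin_cases j <;>
        simp [Matrix.mul_apply, Fin.sum_univ_two, Matrix.conjTranspose_apply]⟩
    have hsa : (Pᴴ * P)ᴴ = Pᴴ * P := by simp [Matrix.conjTranspose_mul]
    have h10 : (Pᴴ * P) 1 0 = star ((Pᴴ * P) 0 1) := by
      conv_lhs => rw [← hsa]
      simp [Matrix.conjTranspose_apply]
    have e10 : (Pᴴ * P) 1 0 = τ (star y) := by rw [← hP]; simp
    have e01 : (Pᴴ * P) 0 1 = τ y := by rw [← hP]; simp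
    rw [e10, e01] at h10
    exact h10
  -- the Kadison–Schwarz inequality for 2-positive unital maps
  have schwarz : ∀ y : A, 0 ≤ τ (y * star y) - τ y * star (τ y) := by
    intro y
    obtain ⟨P, hP⟩ := h2pos !![y * star y, y; star y, 1] ⟨!![star y, 1; 0, 0], by
      ext i j
      fin_cases i <;> fin_cases j <;>
        simp [Matrix.mul_apply, Fin.sum_univ_two, Matrix.conjTranspose_apply]⟩
    have e00 : (Pᴴ * P) 0 0 = τ (y * star y) := by rw [← hP]; simp
    have e01 : (Pᴴ * P) 0 1 = τ y := by rw [← hP]; simp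
    have e10 : (Pᴴ * P) 1 0 = star (τ y) := by rw [← hP]; simp [hstar]
    have e11 : (Pᴴ * P) 1 1 = 1 := by rw [← hP]; simp [hunital]
    set d : B := star (τ y) with hd
    set w : Fin 2 → B := fun i => P i 0 - P i 1 * d with hw
    have hnn : 0 ≤ star (w 0) * w 0 + star (w 1) * w 1 :=
      add_nonneg (star_mul_self_nonneg _) (star_mul_self_nonneg _)
    have hsum : star (w 0) * w 0 + star (w 1) * w 1
        = (Pᴴ * P) 0 0 - (Pᴴ * P) 0 1 * d - star d * (Pᴴ * P) 1 0
          + star d * ((Pᴴ * P) 1 1 * d) := by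
      simp only [hw, star_sub, StarMul.star_mul, Matrix.mul_apply,
        Matrix.conjTranspose_apply, Fin.sum_univ_two]
      noncomm_ring
    rw [hsum, e00, e01, e10, e11, hd, star_star, one_mul] at hnn
    have hfin : τ (y * star y) - τ y * star (τ y) - τ y * star (τ y) + τ y * star (τ y)
        = τ (y * star y) - τ y * star (τ y) := by noncomm_ring
    rw [hfin] at hnn
    exact hnn
  -- multiplying by a nonnegative real scalar preserves positivity
  have csmul : ∀ (r : ℝ), 0 ≤ r → ∀ b : B, 0 ≤ b → 0 ≤ ((r : ℂ)) • b := by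
    intro r hr b hb
    have h1 : ((r : ℂ)) • b
        = star (((Real.sqrt r : ℝ) : ℂ) • (1 : B)) * b * (((Real.sqrt r : ℝ) : ℂ) • (1 : B)) := by
      simp [star_smul, smul_mul_assoc, mul_smul_comm, smul_smul, ← Complex.ofReal_mul,
        Real.mul_self_sqrt hr]
    rw [h1]
    exact star_left_conjugate_nonneg hb _
  have hdiv : ∀ (s : ℝ), 0 < s → ∀ b : B, 0 ≤ ((s : ℂ)) • b → 0 ≤ b := by
    intro s hs b hb
    have := csmul s⁻¹ (by positivity) _ hb
    rwa [smul_smul, ← Complex.ofReal_mul, inv_mul_cancel₀ hs.ne', Complex.ofReal_one,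
      one_smul] at this
  -- limit argument: if 0 ≤ L + s • M for all s > 0 with M fixed, then 0 ≤ L
  have hlim : ∀ (L M : B), (∀ s : ℝ, 0 < s → 0 ≤ L + ((s : ℂ)) • M) → 0 ≤ L := by
    intro L M h
    have h0 : Filter.Tendsto (fun n : ℕ => (1 / (n + 1) : ℝ)) Filter.atTop (nhds 0) :=
      tendsto_one_div_add_atTop_nhds_zero_nat
    have h1 := (Complex.continuous_ofReal.tendsto 0).comp h0
    have h2 := h1.smul_const M
    have htt : Filter.Tendsto (fun n : ℕ => L + (((1 / (n + 1) : ℝ) : ℂ)) • M)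
        Filter.atTop (nhds L) := by
      simpa using Filter.Tendsto.const_add L h2
    exact (CStarAlgebra.isClosed_nonneg (A := B)).mem_of_tendsto htt
      (Filter.Eventually.of_forall fun n => h _ (by positivity))
  intro a
  constructor
  · intro h
    rw [h (star a), hstar]
  · intro ha x
    set D : B := τ (a * x) - τ a * τ x with hD
    set M : B := τ (star x * x) - star (τ x) * τ x with hM
    -- the main inequality from Schwarz applied to a + t • star x
    have key : ∀ t : ℂ, 0 ≤ (starRingEnd ℂ t) • D + t • star D + (t * starRingEnd ℂ t) • M := by
      intro t
      have h0 := schwarz (a + t • star x)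
      have hxa : τ (star x * star a) = star (τ (a * x)) := by
        rw [← StarMul.star_mul, hstar]
      have heq : τ ((a + t • star x) * star (a + t • star x))
          - τ (a + t • star x) * star (τ (a + t • star x))
          = (starRingEnd ℂ t) • D + t • star D + (t * starRingEnd ℂ t) • M := by
        rw [hD, hM]
        simp only [star_add, star_smul, mul_add, add_mul, smul_mul_assoc, mul_smul_comm,
          smul_smul, map_add, LinearMap.map_smul, star_sub, StarMul.star_mul, star_star,
          starRingEnd_apply, hstar, hxa, ha]
        module
      rw [heq] at h0
      exact h0
    have hMpos : 0 ≤ M := by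
      have := schwarz (star x)
      rw [hM]
      simpa [star_star, hstar] using this
    set L : B := D + star D with hL
    set K : B := Complex.I • (star D - D) with hK
    have hL0 : 0 ≤ L := by
      refine hlim L M fun s hs => ?_
      refine hdiv s hs _ ?_
      have := key ((s : ℝ) : ℂ)
      have heq : (starRingEnd ℂ ((s : ℝ) : ℂ)) • D + ((s : ℝ) : ℂ) • star D
          + (((s : ℝ) : ℂ) * starRingEnd ℂ ((s : ℝ) : ℂ)) • M
          = ((s : ℝ) : ℂ) • (L + ((s : ℝ) : ℂ) • M) := by
        rw [hL, Complex.conj_ofReal]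
        module
      rwa [heq] at this
    have hL0' : 0 ≤ -L := by
      refine hlim (-L) M fun s hs => ?_
      refine hdiv s hs _ ?_
      have := key (-((s : ℝ) : ℂ))
      have heq : (starRingEnd ℂ (-((s : ℝ) : ℂ))) • D + (-((s : ℝ) : ℂ)) • star D
          + ((-((s : ℝ) : ℂ)) * starRingEnd ℂ (-((s : ℝ) : ℂ))) • M
          = ((s : ℝ) : ℂ) • (-L + ((s : ℝ) : ℂ) • M) := by
        rw [hL, map_neg, Complex.conj_ofReal]
        module
      rwa [heq] at this
    have hK0 : 0 ≤ K := by
      refine hlim K M fun s hs => ?_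
      refine hdiv s hs _ ?_
      have := key (((s : ℝ) : ℂ) * Complex.I)
      have heq : (starRingEnd ℂ (((s : ℝ) : ℂ) * Complex.I)) • D
          + (((s : ℝ) : ℂ) * Complex.I) • star D
          + ((((s : ℝ) : ℂ) * Complex.I) * starRingEnd ℂ (((s : ℝ) : ℂ) * Complex.I)) • M
          = ((s : ℝ) : ℂ) • (K + ((s : ℝ) : ℂ) • M) := by
        rw [hK]
        simp only [_root_.map_mul, Complex.conj_ofReal, Complex.conj_I]
        match_scalars <;> ring_nf <;> simp [Complex.I_sq]
      rwa [heq] at this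
    have hK0' : 0 ≤ -K := by
      refine hlim (-K) M fun s hs => ?_
      refine hdiv s hs _ ?_
      have := key (-(((s : ℝ) : ℂ) * Complex.I))
      have heq : (starRingEnd ℂ (-(((s : ℝ) : ℂ) * Complex.I))) • D
          + (-(((s : ℝ) : ℂ) * Complex.I)) • star D
          + ((-(((s : ℝ) : ℂ) * Complex.I)) * starRingEnd ℂ (-(((s : ℝ) : ℂ) * Complex.I))) • M
          = ((s : ℝ) : ℂ) • (-K + ((s : ℝ) : ℂ) • M) := by
        rw [hK]
        simp only [_root_.map_neg, _root_.map_mul, Complex.conj_ofReal, Complex.conj_I]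
        match_scalars <;> ring_nf <;> simp [Complex.I_sq]
      rwa [heq] at this
    have hLz : L = 0 := le_antisymm (neg_nonneg.mp hL0') hL0
    have hKz : K = 0 := le_antisymm (neg_nonneg.mp hK0') hK0
    have hsD : star D = -D := by
      have h2 : D + star D = 0 := by rw [← hL]; exact hLz
      exact eq_neg_of_add_eq_zero_right h2
    have hKD : (Complex.I * (-2)) • D = 0 := by
      rw [← hKz, hK, hsD]
      module
    have hDz : D = 0 := by
      have h2 : ((Complex.I * (-2))⁻¹) • ((Complex.I * (-2)) • D) = D := by
        rw [smul_smul, inv_mul_cancel₀ (by simp [Complex.ext_iff]), one_smul]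
      rw [← h2, hKD, smul_zero]
    have hfin : τ (a * x) - τ a * τ x = 0 := by rw [← hD]; exact hDz
    exact sub_eq_zero.mp hfin
end

section
/- Let X be a compact Hausdorff space, σ : X → X a homeomorphism, and n ≥ 1 an integer. Suppose x and y are points of the interior of Per^n(σ) whose orbits O(x) and O(y) are disjoint. Then there exist two disjoint open subsets U₁, U₂ of X contained in the interior of Per^n(σ), each invariant under σ and σ⁻¹ (i.e., σ(Uᵢ) = Uᵢ), with x ∈ U₁ and y ∈ U₂. -/
/-- The orbit `O(x) = {σ^k(x) : k ∈ ℤ}` of a point `x`. -/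
def orbit {X : Type*} [TopologicalSpace X] (σ : X ≃ₜ X) (x : X) : Set X :=
  {y : X | ∃ k : ℤ, (σ.toEquiv ^ k) x = y}

/-!
On `Per^n(σ)` every orbit is finite, so in a Hausdorff space the orbits of `x` and `y` are
disjoint compact sets with disjoint open neighbourhoods `V₁`, `V₂`. Inside the open set
`Per^n(σ)°` the condition "the whole orbit lies in `V`" only involves the finitely many powers
`σ^0, …, σ^(n-1)`, so the points of `Per^n(σ)° ∩ Vᵢ` whose orbit stays in it form the required
invariant open set `Uᵢ`.
-/

theorem Homeomorph.coe_zpow {X : Type*} [TopologicalSpace X] (σ : X ≃ₜ X) (k : ℤ) :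
    ⇑(σ ^ k) = ⇑(σ.toEquiv ^ k) := by
  change ⇑(MonoidHom.mk' Homeomorph.toEquiv (fun _ _ => rfl) (σ ^ k)) = _
  rw [map_zpow]
  rfl

section Periodic

variable {X : Type*} [TopologicalSpace X] {σ : X ≃ₜ X} {n : ℤ} {z : X}

theorem zpow_apply_mem_perN (hz : z ∈ perN σ n) (k : ℤ) : (σ.toEquiv ^ k) z ∈ perN σ n := by
  change (σ.toEquiv ^ n) ((σ.toEquiv ^ k) z) = (σ.toEquiv ^ k) z
  rw [← Equiv.Perm.mul_apply, ← zpow_add, add_comm, zpow_add, Equiv.Perm.mul_apply]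
  exact congrArg _ hz

theorem zpow_apply_eq_emod (hz : z ∈ perN σ n) (k : ℤ) :
    (σ.toEquiv ^ k) z = (σ.toEquiv ^ (k % n)) z := by
  have hfix : (σ.toEquiv ^ (n * (k / n))) z = z := by
    rw [zpow_mul]
    exact Function.IsFixedPt.perm_zpow hz (k / n)
  conv_lhs => rw [← Int.emod_add_mul_ediv k n, zpow_add, Equiv.Perm.mul_apply, hfix]

theorem orbit_eq_image_Ico (hz : z ∈ perN σ n) (hn : n ≠ 0) :
    orbit σ z = (fun k => (σ.toEquiv ^ k) z) '' Set.Ico 0 |n| := by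
  ext w
  constructor
  · rintro ⟨k, rfl⟩
    exact ⟨k % n, ⟨Int.emod_nonneg k hn, Int.emod_lt_abs k hn⟩, (zpow_apply_eq_emod hz k).symm⟩
  · rintro ⟨k, -, rfl⟩
    exact ⟨k, rfl⟩

theorem finite_orbit (hz : z ∈ perN σ n) (hn : n ≠ 0) : (orbit σ z).Finite := by
  rw [orbit_eq_image_Ico hz hn]
  exact (Set.finite_Ico 0 |n|).image _

theorem orbit_subset_interior_perN (hz : z ∈ interior (perN σ n)) :
    orbit σ z ⊆ interior (perN σ n) := by
  rintro _ ⟨k, rfl⟩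
  have hmaps : (σ ^ k) '' perN σ n ⊆ perN σ n := by
    rintro _ ⟨w, hw, rfl⟩
    rw [Homeomorph.coe_zpow]
    exact zpow_apply_mem_perN hw k
  have := interior_mono hmaps ((σ ^ k).image_interior (perN σ n) ▸ Set.mem_image_of_mem _ hz)
  rwa [Homeomorph.coe_zpow] at this

end Periodic

/-- The largest subset of `V` invariant under `σ` and `σ⁻¹`. -/
def invariantCore {X : Type*} [TopologicalSpace X] (σ : X ≃ₜ X) (V : Set X) : Set X :=
  {z | orbit σ z ⊆ V}

section InvariantCore

variable {X : Type*} [TopologicalSpace X] {σ : X ≃ₜ X} {V : Set X}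

theorem mem_orbit_self (σ : X ≃ₜ X) (z : X) : z ∈ orbit σ z := ⟨0, rfl⟩

theorem orbit_apply (σ : X ≃ₜ X) (z : X) : orbit σ (σ z) = orbit σ z := by
  have hshift (k : ℤ) : (σ.toEquiv ^ k) (σ z) = (σ.toEquiv ^ (k + 1)) z := by
    rw [zpow_add_one, Equiv.Perm.mul_apply]
    rfl
  ext w
  constructor
  · rintro ⟨k, rfl⟩
    exact ⟨k + 1, (hshift k).symm⟩
  · rintro ⟨k, rfl⟩
    exact ⟨k - 1, by rw [hshift, sub_add_cancel]⟩

theorem invariantCore_subset : invariantCore σ V ⊆ V :=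
  fun z hz => hz (mem_orbit_self σ z)

theorem image_invariantCore : σ '' invariantCore σ V = invariantCore σ V := by
  ext z
  constructor
  · rintro ⟨w, hw, rfl⟩
    exact (orbit_apply σ w).subset.trans hw
  · intro hz
    refine ⟨σ.symm z, ?_, σ.apply_symm_apply z⟩
    change orbit σ _ ⊆ V
    rwa [← orbit_apply σ, σ.apply_symm_apply]

theorem invariantCore_eq_biInter {n : ℤ} (hV : V ⊆ perN σ n) (hn : n ≠ 0) :
    invariantCore σ V = ⋂ k ∈ Set.Ico 0 |n|, (σ.toEquiv ^ k) ⁻¹' V := by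
  ext z
  simp only [Set.mem_iInter, Set.mem_preimage]
  constructor
  · exact fun hz k _ => hz ⟨k, rfl⟩
  · intro hz
    have hzper : z ∈ perN σ n := hV (hz 0 ⟨le_rfl, abs_pos.mpr hn⟩)
    rintro _ ⟨k, rfl⟩
    rw [zpow_apply_eq_emod hzper]
    exact hz _ ⟨Int.emod_nonneg k hn, Int.emod_lt_abs k hn⟩

theorem IsOpen.invariantCore {n : ℤ} (hV : IsOpen V) (hVper : V ⊆ perN σ n) (hn : n ≠ 0) :
    IsOpen (invariantCore σ V) := by
  rw [invariantCore_eq_biInter hVper hn]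
  refine (Set.finite_Ico 0 |n|).isOpen_biInter fun k _ => hV.preimage ?_
  rw [← Homeomorph.coe_zpow]
  exact (σ ^ k).continuous

end InvariantCore

/-- Let `X` be compact Hausdorff, `σ : X → X` a homeomorphism, `n ≥ 1`, and let `x, y` be
points of the interior of `Per^n(σ)` with disjoint orbits. Then there are disjoint open
subsets `U₁, U₂ ⊆ interior (Per^n(σ))`, each invariant under `σ` and `σ⁻¹`
(i.e. `σ(Uᵢ) = Uᵢ`), with `x ∈ U₁` and `y ∈ U₂`. -/
theorem exists_disjoint_invariant_opens {X : Type*} [TopologicalSpace X] [CompactSpace X]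
    [T2Space X] (σ : X ≃ₜ X) (n : ℤ) (hn : 1 ≤ n) (x y : X)
    (hx : x ∈ interior (perN σ n)) (hy : y ∈ interior (perN σ n))
    (hdisj : Disjoint (orbit σ x) (orbit σ y)) :
    ∃ U₁ U₂ : Set X, IsOpen U₁ ∧ IsOpen U₂ ∧ Disjoint U₁ U₂ ∧
      U₁ ⊆ interior (perN σ n) ∧ U₂ ⊆ interior (perN σ n) ∧
      σ '' U₁ = U₁ ∧ σ '' U₂ = U₂ ∧ x ∈ U₁ ∧ y ∈ U₂ := by
  have hn0 : n ≠ 0 := by omega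
  obtain ⟨V₁, V₂, hV₁, hV₂, hxV, hyV, hV⟩ := SeparatedNhds.of_isCompact_isCompact
    (finite_orbit (interior_subset hx) hn0).isCompact
    (finite_orbit (interior_subset hy) hn0).isCompact hdisj
  have hper (V : Set X) : interior (perN σ n) ∩ V ⊆ perN σ n :=
    Set.inter_subset_left.trans interior_subset
  refine ⟨invariantCore σ (interior (perN σ n) ∩ V₁), invariantCore σ (interior (perN σ n) ∩ V₂),
    (isOpen_interior.inter hV₁).invariantCore (hper V₁) hn0,
    (isOpen_interior.inter hV₂).invariantCore (hper V₂) hn0,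
    hV.mono (invariantCore_subset.trans Set.inter_subset_right)
      (invariantCore_subset.trans Set.inter_subset_right),
    invariantCore_subset.trans Set.inter_subset_left,
    invariantCore_subset.trans Set.inter_subset_left,
    image_invariantCore, image_invariantCore,
    Set.subset_inter (orbit_subset_interior_perN hx) hxV,
    Set.subset_inter (orbit_subset_interior_perN hy) hyV⟩
end
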